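/- The map Δ defined on generators of G_{r,s} by Δ(a) = a⊗a + b⊗c, Δ(b) = a⊗b + b⊗d, Δ(c) = c⊗a + d⊗c, Δ(d) = c⊗b + d⊗d, Δ(f) = f⊗f preserves the defining relation ab = r^{-1}ba, i.e. Δ(a)Δ(b) = r^{-1}Δ(b)Δ(a) in G_{r,s} ⊗ G_{r,s}. -/
import Mathlib


open TensorProduct

/-- The coproduct `Δ(a) = a⊗a + b⊗c`, `Δ(b) = a⊗b + b⊗d` preserves the
relation `ab = r⁻¹ ba`, i.e. `Δ(a)Δ(b) = r⁻¹ Δ(b)Δ(a)` in `G_{r,s} ⊗ G_{r,s}`. -/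
theorem Grs_coproduct_preserves_ab_relation
    {A : Type*} [Ring A] [Algebra ℂ A] (r s : ℂ) (hr : r ≠ 0) (hs : s ≠ 0)
    (a b c d f : A)
    (hab : a * b = r⁻¹ • (b * a)) (hac : a * c = r⁻¹ • (c * a))
    (hdb : d * b = r • (b * d)) (hdc : d * c = r • (c * d))
    (hbc : b * c = c * b) (had : a * d - d * a = (r⁻¹ - r) • (b * c))
    (haf : a * f = f * a) (hbf : b * f = s⁻¹ • (f * b))
    (hcf : c * f = s • (f * c)) (hdf : d * f = f * d) :
    ((a ⊗ₜ[ℂ] a + b ⊗ₜ[ℂ] c) * (a ⊗ₜ[ℂ] b + b ⊗ₜ[ℂ] d) : A ⊗[ℂ] A)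
      = r⁻¹ • ((a ⊗ₜ[ℂ] b + b ⊗ₜ[ℂ] d) * (a ⊗ₜ[ℂ] a + b ⊗ₜ[ℂ] c)) := by
  have had' : a * d = d * a + (r⁻¹ - r) • (b * c) := by
    rw [← had]; abel
  have key : (r⁻¹ • (a * d) + c * b : A) = (r⁻¹ * r⁻¹) • (b * c) + r⁻¹ • (d * a) := by
    rw [had', ← hbc, smul_add, smul_smul]
    have : r⁻¹ * (r⁻¹ - r) = r⁻¹ * r⁻¹ - 1 := by
      field_simp
    rw [this, sub_smul, one_smul]
    abel
  have hcd : (c * d : A) = (r⁻¹ * r) • (c * d) := by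
    rw [inv_mul_cancel₀ hr, one_smul]
  calc ((a ⊗ₜ[ℂ] a + b ⊗ₜ[ℂ] c) * (a ⊗ₜ[ℂ] b + b ⊗ₜ[ℂ] d) : A ⊗[ℂ] A)
      = (a*a) ⊗ₜ[ℂ] (a*b) + ((a*b) ⊗ₜ[ℂ] (a*d) + (b*a) ⊗ₜ[ℂ] (c*b)) + (b*b) ⊗ₜ[ℂ] (c*d) := by
        simp only [mul_add, add_mul, Algebra.TensorProduct.tmul_mul_tmul]
        abel
    _ = r⁻¹ • ((a*a) ⊗ₜ[ℂ] (b*a)) + ((b*a) ⊗ₜ[ℂ] (r⁻¹ • (a*d) + c*b))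
          + (b*b) ⊗ₜ[ℂ] (c*d) := by
        simp only [hab, tmul_smul, smul_tmul', tmul_add, ← smul_tmul']
    _ = r⁻¹ • ((a*a) ⊗ₜ[ℂ] (b*a)) + ((b*a) ⊗ₜ[ℂ] ((r⁻¹ * r⁻¹) • (b*c) + r⁻¹ • (d*a)))
          + (b*b) ⊗ₜ[ℂ] ((r⁻¹ * r) • (c*d)) := by
        rw [key, ← hcd]
    _ = r⁻¹ • ((a ⊗ₜ[ℂ] b + b ⊗ₜ[ℂ] d) * (a ⊗ₜ[ℂ] a + b ⊗ₜ[ℂ] c)) := by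
        simp only [mul_add, add_mul, Algebra.TensorProduct.tmul_mul_tmul, tmul_add,
          tmul_smul, smul_add, smul_smul, hab, hdc]
        simp only [← smul_tmul', smul_smul]
        abel
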